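/- Let κ, θ, σ > 0 with α := (4κθ − σ²)/8 ≥ 0, let T > 0, let N ∈ ℕ, and let h : ℕ → ℝ be a sequence of strictly positive step sizes with ∑_{i=1}^{N} h(i) ≤ T. On a probability space (Ω, F, ℙ) let (ξ_n)_{n∈ℕ} be an independent family of real random variables with ξ_n distributed as the Gaussian measure with mean 0 and variance h(n+1). Define recursively X_0 = x₀ for a constant x₀ ≥ 0 and X_{n+1} = e^{−κ h(n+1)} (√(X_n + 2α h(n+1)) + (σ/2) ξ_n)². Then for every n ≤ N, X_n is nonnegative and integrable and E[X_n] ≤ x₀ + κθT. -/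

import Mathlib

/-!
Expanding the square, `E[X_{n+1}] = e^{-κh}(E[X_n] + 2αh + σ²h/4)`: the noise `ξ_n` is centred
with variance `h` and independent of `X_n`, which is a measurable function of `ξ_0, …, ξ_{n-1}`,
so the cross term `√(X_n + 2αh) ξ_n` has mean zero. As `2α + σ²/4 = κθ` and `e^{-κh} ≤ 1`, each
step raises the mean by at most `κθh`, and the step sizes add up to at most `T`.
-/

open MeasureTheory ProbabilityTheory

section Recursion

variable {Ω β γ : Type*} {mΩ : MeasurableSpace Ω} [mβ : MeasurableSpace β] [MeasurableSpace γ]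
  {ξ : ℕ → Ω → β}

theorem measurable_biSup_comap_of_recursion {X : ℕ → Ω → γ} {F : ℕ → γ → β → γ}
    (hF : ∀ n, Measurable (Function.uncurry (F n))) (x₀ : γ) (hX0 : ∀ ω, X 0 ω = x₀)
    (hXrec : ∀ n ω, X (n + 1) ω = F n (X n ω) (ξ n ω)) (n : ℕ) :
    Measurable[⨆ i ∈ Set.Iio n, mβ.comap (ξ i)] (X n) := by
  induction n with
  | zero => simp [funext hX0]
  | succ n ih =>
    have hX : Measurable[⨆ i ∈ Set.Iio (n + 1), mβ.comap (ξ i)] (X n) :=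
      ih.mono (biSup_mono fun i hi => Set.mem_Iio.mpr (Nat.lt_succ_of_lt hi)) le_rfl
    have hξn : Measurable[⨆ i ∈ Set.Iio (n + 1), mβ.comap (ξ i)] (ξ n) :=
      Measurable.of_comap_le <|
        le_biSup (fun i => mβ.comap (ξ i)) (Set.mem_Iio.mpr n.lt_succ_self)
    rw [funext (hXrec n)]
    exact (hF n).comp (hX.prodMk hξn)

end Recursion

namespace ProbabilityTheory

variable {Ω : Type*} {mΩ : MeasurableSpace Ω} {μ : Measure Ω}

theorem iIndepFun.indepFun_of_measurable_biSup_comap {β γ : Type*} [mβ : MeasurableSpace β]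
    [MeasurableSpace γ] {ξ : ℕ → Ω → β} (hξ : iIndepFun ξ μ) (hξm : ∀ i, Measurable (ξ i))
    {n : ℕ} {Y : Ω → γ}
    (hY : Measurable[⨆ i ∈ Set.Iio n, mβ.comap (ξ i)] Y) : IndepFun Y (ξ n) μ := by
  have hdisj : Disjoint (Set.Iio n) {n} := Set.disjoint_singleton_right.mpr (lt_irrefl n)
  have h := indep_iSup_of_disjoint (fun i => (hξm i).comap_le)
    ((iIndepFun_iff_iIndep _ ξ μ).mp hξ) hdisj
  rw [iSup_singleton] at h
  exact (IndepFun_iff_Indep Y (ξ n) μ).mpr (indep_of_indep_of_le_left h hY.comap_le)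

theorem IndepFun.integral_add_const_mul_sq [IsProbabilityMeasure μ] {Z ξ : Ω → ℝ}
    (hind : IndepFun Z ξ μ) (hZ : MemLp Z 2 μ) (hξ : MemLp ξ 2 μ) (hξ0 : ∫ ω, ξ ω ∂μ = 0) (s : ℝ) :
    ∫ ω, (Z ω + s * ξ ω) ^ 2 ∂μ = ∫ ω, Z ω ^ 2 ∂μ + s ^ 2 * ∫ ω, ξ ω ^ 2 ∂μ := by
  have hcross : ∫ ω, Z ω * ξ ω ∂μ = 0 := by
    rw [hind.integral_fun_mul_eq_mul_integral hZ.aestronglyMeasurable hξ.aestronglyMeasurable,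
      hξ0, mul_zero]
  have hZξ : Integrable (fun ω => Z ω * ξ ω) μ := hZ.integrable_mul hξ
  calc ∫ ω, (Z ω + s * ξ ω) ^ 2 ∂μ
      = ∫ ω, (Z ω ^ 2 + 2 * s * (Z ω * ξ ω) + s ^ 2 * ξ ω ^ 2) ∂μ := by
        congr 1 with ω; ring
    _ = ∫ ω, Z ω ^ 2 ∂μ + 2 * s * ∫ ω, Z ω * ξ ω ∂μ + s ^ 2 * ∫ ω, ξ ω ^ 2 ∂μ := by
        rw [integral_add (hZ.integrable_sq.fun_add (hZξ.const_mul _))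
          (hξ.integrable_sq.const_mul _), integral_add hZ.integrable_sq (hZξ.const_mul _),
          integral_const_mul, integral_const_mul]
    _ = _ := by rw [hcross]; ring

variable {ξ : Ω → ℝ} {v : NNReal}

theorem HasLaw.memLp_of_gaussianReal {m : ℝ} (hξ : HasLaw ξ (gaussianReal m v) μ) (p : NNReal) :
    MemLp ξ p μ := by
  have h := memLp_id_gaussianReal (μ := m) (v := v) p
  rw [← hξ.map_eq, memLp_map_measure_iff aestronglyMeasurable_id hξ.aemeasurable] at h
  exact h

theorem HasLaw.integral_eq_zero_of_gaussianReal (hξ : HasLaw ξ (gaussianReal 0 v) μ) :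
    ∫ ω, ξ ω ∂μ = 0 := by
  rw [hξ.integral_eq, integral_id_gaussianReal]

theorem HasLaw.integral_sq_of_gaussianReal (hξ : HasLaw ξ (gaussianReal 0 v) μ) :
    ∫ ω, ξ ω ^ 2 ∂μ = v := by
  rw [← variance_of_integral_eq_zero hξ.aemeasurable hξ.integral_eq_zero_of_gaussianReal,
    hξ.variance_eq, variance_id_gaussianReal]

end ProbabilityTheory

noncomputable def cirSplittingStep (κ σ α Δt x w : ℝ) : ℝ :=
  Real.exp (-κ * Δt) * (Real.sqrt (x + 2 * α * Δt) + σ / 2 * w) ^ 2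

section CIR

variable {κ σ α Δt : ℝ}

theorem measurable_cirSplittingStep :
    Measurable (Function.uncurry (cirSplittingStep κ σ α Δt)) := by
  unfold cirSplittingStep
  fun_prop

theorem cirSplittingStep_nonneg (x w : ℝ) : 0 ≤ cirSplittingStep κ σ α Δt x w := by
  unfold cirSplittingStep
  positivity

variable {Ω : Type*} {mΩ : MeasurableSpace Ω} {μ : Measure Ω} [IsProbabilityMeasure μ]

theorem integral_cirSplittingStep_le {Y ξ : Ω → ℝ} (hκ : 0 ≤ κ) (hα : 0 ≤ α) (hΔt : 0 ≤ Δt)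
    (hY : ∀ ω, 0 ≤ Y ω) (hYi : Integrable Y μ) (hξ : HasLaw ξ (gaussianReal 0 Δt.toNNReal) μ)
    (hind : IndepFun Y ξ μ) :
    Integrable (fun ω => cirSplittingStep κ σ α Δt (Y ω) (ξ ω)) μ ∧
      ∫ ω, cirSplittingStep κ σ α Δt (Y ω) (ξ ω) ∂μ ≤
        ∫ ω, Y ω ∂μ + (2 * α + σ ^ 2 / 4) * Δt := by
  set c := 2 * α * Δt
  have hc : 0 ≤ c := by positivity
  set Z : Ω → ℝ := fun ω => Real.sqrt (Y ω + c)
  have hZsq : ∀ ω, Z ω ^ 2 = Y ω + c := fun ω => Real.sq_sqrt (add_nonneg (hY ω) hc)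
  have hZ : MemLp Z 2 μ := by
    refine (memLp_two_iff_integrable_sq
      (hYi.aemeasurable.add_const c).sqrt.aestronglyMeasurable).mpr ?_
    exact (hYi.add (integrable_const c)).congr (ae_of_all _ fun ω => (hZsq ω).symm)
  have hξ2 : MemLp ξ 2 μ := hξ.memLp_of_gaussianReal 2
  have hZξ : IndepFun Z ξ μ :=
    hind.comp (φ := fun y => Real.sqrt (y + c)) (ψ := id) (by fun_prop) measurable_id
  have hsq : ∫ ω, (Z ω + σ / 2 * ξ ω) ^ 2 ∂μ = ∫ ω, Y ω ∂μ + (2 * α + σ ^ 2 / 4) * Δt := by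
    rw [hZξ.integral_add_const_mul_sq hZ hξ2 hξ.integral_eq_zero_of_gaussianReal,
      hξ.integral_sq_of_gaussianReal, Real.coe_toNNReal _ hΔt]
    simp only [hZsq]
    rw [integral_add hYi (integrable_const c), integral_const]
    simp only [probReal_univ, smul_eq_mul, one_mul]
    ring
  have hexp : Real.exp (-κ * Δt) ≤ 1 := Real.exp_le_one_iff.mpr (by nlinarith)
  refine ⟨((hZ.add (hξ2.const_mul (σ / 2))).integrable_sq).const_mul _, ?_⟩
  calc ∫ ω, cirSplittingStep κ σ α Δt (Y ω) (ξ ω) ∂μ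
      = Real.exp (-κ * Δt) * ∫ ω, (Z ω + σ / 2 * ξ ω) ^ 2 ∂μ := integral_const_mul _ _
    _ ≤ ∫ ω, (Z ω + σ / 2 * ξ ω) ^ 2 ∂μ :=
        mul_le_of_le_one_left (integral_nonneg fun ω => sq_nonneg _) hexp
    _ = _ := hsq

theorem integral_cirSplittingScheme_le {ξ X : ℕ → Ω → ℝ} {h : ℕ → ℝ} {x₀ : ℝ}
    (hκ : 0 ≤ κ) (hα : 0 ≤ α) (hh : ∀ n, 0 ≤ h n)
    (hξ : ∀ n, HasLaw (ξ n) (gaussianReal 0 (h (n + 1)).toNNReal) μ)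
    (hind : ∀ n, IndepFun (X n) (ξ n) μ) (hx₀ : 0 ≤ x₀) (hX0 : ∀ ω, X 0 ω = x₀)
    (hXrec : ∀ n ω, X (n + 1) ω = cirSplittingStep κ σ α (h (n + 1)) (X n ω) (ξ n ω)) (n : ℕ) :
    (∀ ω, 0 ≤ X n ω) ∧ Integrable (X n) μ ∧
      ∫ ω, X n ω ∂μ ≤ x₀ + (2 * α + σ ^ 2 / 4) * ∑ i ∈ Finset.Icc 1 n, h i := by
  induction n with
  | zero => simp [funext hX0, hx₀]
  | succ n ih =>
    obtain ⟨hpos, hint, hbound⟩ := ih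
    have hXn : X (n + 1) = fun ω => cirSplittingStep κ σ α (h (n + 1)) (X n ω) (ξ n ω) :=
      funext (hXrec n)
    obtain ⟨hint', hstep⟩ :=
      integral_cirSplittingStep_le hκ hα (hh (n + 1)) hpos hint (hξ n) (hind n)
    refine ⟨fun ω => hXn ▸ cirSplittingStep_nonneg _ _, hXn ▸ hint', ?_⟩
    rw [← hXn] at hstep
    rw [Finset.sum_Icc_succ_top (Nat.le_add_left 1 n)]
    linarith

end CIR

theorem splitting_scheme_uniform_moment_bound_general
    {Ω : Type*} [MeasurableSpace Ω] (μ : Measure Ω) [IsProbabilityMeasure μ]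
    (κ θ σ α : ℝ) (hκ : 0 < κ) (hθ : 0 < θ)
    (hα : α = (4 * κ * θ - σ ^ 2) / 8) (hα0 : 0 ≤ α)
    (T : ℝ) (N : ℕ) (h : ℕ → ℝ) (hh : ∀ n, 0 < h n)
    (hsum : ∑ i ∈ Finset.Icc 1 N, h i ≤ T)
    (ξ : ℕ → Ω → ℝ) (hξ_meas : ∀ n, Measurable (ξ n))
    (hξ_indep : iIndepFun ξ μ)
    (hξ_law : ∀ n, Measure.map (ξ n) μ = gaussianReal 0 (h (n + 1)).toNNReal)
    (x₀ : ℝ) (hx₀ : 0 ≤ x₀)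
    (X : ℕ → Ω → ℝ) (hX0 : ∀ ω, X 0 ω = x₀)
    (hXrec : ∀ n ω, X (n + 1) ω =
      Real.exp (-κ * h (n + 1)) *
        (Real.sqrt (X n ω + 2 * α * h (n + 1)) + σ / 2 * ξ n ω) ^ 2) :
    ∀ n ≤ N, (∀ ω, 0 ≤ X n ω) ∧ Integrable (X n) μ ∧
      ∫ ω, X n ω ∂μ ≤ x₀ + κ * θ * T := by
  have hind : ∀ n, IndepFun (X n) (ξ n) μ := fun n =>
    hξ_indep.indepFun_of_measurable_biSup_comap hξ_meas <|
      measurable_biSup_comap_of_recursion (F := fun n => cirSplittingStep κ σ α (h (n + 1)))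
        (fun _ => measurable_cirSplittingStep) x₀ hX0 hXrec n
  have hκθ : 2 * α + σ ^ 2 / 4 = κ * θ := by rw [hα]; ring
  intro n hn
  obtain ⟨hpos, hint, hbound⟩ := integral_cirSplittingScheme_le hκ.le hα0 (fun n => (hh n).le)
    (fun n => ⟨(hξ_meas n).aemeasurable, hξ_law n⟩) hind hx₀ hX0 hXrec n
  have hsub : ∑ i ∈ Finset.Icc 1 n, h i ≤ T :=
    (Finset.sum_le_sum_of_subset_of_nonneg (Finset.Icc_subset_Icc_right hn)
      fun i _ _ => (hh i).le).trans hsum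
  refine ⟨hpos, hint, hbound.trans ?_⟩
  rw [hκθ]
  gcongr

/-- Uniform moment bound (deterministic-mesh case of Theorem 4.1) for the CIR splitting
scheme: with `α = (4κθ − σ²)/8 ≥ 0`, step sizes `h(1), …, h(N)` summing to at most `T`,
`ξ_n ~ N(0, h(n+1))` independent, and
`X_{n+1} = e^{−κh(n+1)}(√(X_n + 2αh(n+1)) + (σ/2)ξ_n)²`, every `X_n` with `n ≤ N` is
nonnegative and integrable and satisfies `E[X_n] ≤ x₀ + κθT`. -/
theorem splitting_scheme_uniform_moment_bound
    {Ω : Type*} [MeasurableSpace Ω] (μ : Measure Ω) [IsProbabilityMeasure μ]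
    (κ θ σ α : ℝ) (hκ : 0 < κ) (hθ : 0 < θ) (hσ : 0 < σ)
    (hα : α = (4 * κ * θ - σ ^ 2) / 8) (hα0 : 0 ≤ α)
    (T : ℝ) (hT : 0 < T) (N : ℕ) (h : ℕ → ℝ) (hh : ∀ n, 0 < h n)
    (hsum : ∑ i ∈ Finset.Icc 1 N, h i ≤ T)
    (ξ : ℕ → Ω → ℝ) (hξ_meas : ∀ n, Measurable (ξ n))
    (hξ_indep : iIndepFun ξ μ)
    (hξ_law : ∀ n, Measure.map (ξ n) μ = gaussianReal 0 (h (n + 1)).toNNReal)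
    (x₀ : ℝ) (hx₀ : 0 ≤ x₀)
    (X : ℕ → Ω → ℝ) (hX0 : ∀ ω, X 0 ω = x₀)
    (hXrec : ∀ n ω, X (n + 1) ω =
      Real.exp (-κ * h (n + 1)) *
        (Real.sqrt (X n ω + 2 * α * h (n + 1)) + σ / 2 * ξ n ω) ^ 2) :
    ∀ n ≤ N, (∀ ω, 0 ≤ X n ω) ∧ Integrable (X n) μ ∧
      ∫ ω, X n ω ∂μ ≤ x₀ + κ * θ * T :=
  splitting_scheme_uniform_moment_bound_general μ κ θ σ α hκ hθ hα hα0 T N h hh hsum ξ hξ_meas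
    hξ_indep hξ_law x₀ hx₀ X hX0 hXrec
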